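/- arXiv:1911.10879 — 8 statements merged into one kernel-verified Lean document; each statement's English description precedes it below -/
import Mathlib

section
/- Let (Ω, 𝒜) be a measurable space, let μ and ν be probability measures on Ω, and let (f_k)_{k ∈ K} be a finite family of measurable functions f_k : Ω → ℝ with 0 ≤ f_k(ω) for all k and ω, and ∑_{k ∈ K} f_k(ω) = 1 for every ω ∈ Ω. If for every k ∈ K, either ∫ f_k dμ = 0 or ∫ f_k dν = 0, then there exists a measurable set Δ ⊆ Ω with μ(Δ) = 1 and ν(Δ) = 0; in particular μ and ν are mutually singular. -/
/-!
Let `S` be the set of outcomes `k` with `∫ f k ∂μ = 0`. Since `0 ≤ f k ≤ 1`, a vanishing integral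
forces `f k = 0` almost everywhere, so `g = ∑ k ∈ S, f k` is `0` `μ`-a.e., while every `f k` with
`k ∉ S` vanishes `ν`-a.e. and hence `g = 1` `ν`-a.e. The level set `{g = 0}` separates `μ` from `ν`.
-/

open MeasureTheory

namespace MeasureTheory

variable {Ω : Type*} [MeasurableSpace Ω]

lemma ae_eq_zero_of_integral_eq_zero_of_nonneg_of_le {μ : Measure Ω} [IsFiniteMeasure μ]
    {g : Ω → ℝ} {C : ℝ} (hg : Measurable g) (hg_nonneg : ∀ ω, 0 ≤ g ω) (hg_le : ∀ ω, g ω ≤ C)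
    (hint : ∫ ω, g ω ∂μ = 0) : g =ᵐ[μ] 0 := by
  have hg_int : Integrable g μ := .of_bound hg.aestronglyMeasurable C <| .of_forall fun ω ↦ by
    rw [Real.norm_of_nonneg (hg_nonneg ω)]
    exact hg_le ω
  exact (integral_eq_zero_iff_of_nonneg hg_nonneg hg_int).mp hint

lemma Measure.MutuallySingular.of_ae_eq_const {μ ν : Measure Ω} {g : Ω → ℝ} {a b : ℝ}
    (hg : Measurable g) (hμ : g =ᵐ[μ] fun _ ↦ a) (hν : g =ᵐ[ν] fun _ ↦ b) (hab : a ≠ b) :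
    μ ⟂ₘ ν := by
  refine ⟨(g ⁻¹' {a})ᶜ, (hg (measurableSet_singleton a)).compl, ?_, ?_⟩
  · exact measure_eq_zero_iff_ae_notMem.mpr <| hμ.mono fun ω hω ↦ by simpa using hω
  · rw [compl_compl]
    exact measure_eq_zero_iff_ae_notMem.mpr <| hν.mono fun ω hω ↦ by simpa [hω] using hab.symm

lemma Measure.MutuallySingular.of_sum_eq_one {μ ν : Measure Ω} {K : Type*} [Fintype K]
    {f : K → Ω → ℝ} (hf_meas : ∀ k, Measurable (f k)) (hf_sum : ∀ ω, ∑ k, f k ω = 1)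
    (S : Finset K) (hμ : ∀ k ∈ S, f k =ᵐ[μ] 0) (hν : ∀ k ∉ S, f k =ᵐ[ν] 0) : μ ⟂ₘ ν := by
  classical
  have hμ_sum : (fun ω ↦ ∑ k ∈ S, f k ω) =ᵐ[μ] fun _ ↦ 0 := by
    filter_upwards [(Filter.eventually_all_finset S).mpr hμ] with ω hω
    exact Finset.sum_eq_zero hω
  have hν_sum : (fun ω ↦ ∑ k ∈ S, f k ω) =ᵐ[ν] fun _ ↦ 1 := by
    filter_upwards [(Filter.eventually_all_finset Sᶜ).mpr fun k hk ↦ hν k (Finset.mem_compl.mp hk)]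
      with ω hω
    rw [← hf_sum ω, ← Finset.sum_add_sum_compl S, Finset.sum_eq_zero hω, add_zero]
  exact .of_ae_eq_const (Finset.measurable_sum S fun k _ ↦ hf_meas k) hμ_sum hν_sum zero_ne_one

end MeasureTheory

/-- Single-theory core of Theorem 1: if for every readout outcome `k` at least one of the
two act-outcome credences `∫ f k ∂μ`, `∫ f k ∂ν` vanishes (R-distinguishability), then the
agent's state-credences `μ` and `ν` under the two acts are ontically distinct: there is a
measurable set of full `μ`-measure and zero `ν`-measure, i.e. `μ` and `ν` are mutually
singular. -/
theorem stmt0 {Ω : Type*} [MeasurableSpace Ω] (μ ν : Measure Ω)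
    [IsProbabilityMeasure μ] [IsProbabilityMeasure ν]
    {K : Type*} [Fintype K] (f : K → Ω → ℝ)
    (hf_meas : ∀ k, Measurable (f k))
    (hf_nonneg : ∀ k ω, 0 ≤ f k ω)
    (hf_sum : ∀ ω, ∑ k, f k ω = 1)
    (hdist : ∀ k, (∫ ω, f k ω ∂μ) = 0 ∨ (∫ ω, f k ω ∂ν) = 0) :
    (∃ Δ : Set Ω, MeasurableSet Δ ∧ μ Δ = 1 ∧ ν Δ = 0) ∧ μ.MutuallySingular ν := by
  classical
  have hf_le_one (k : K) (ω : Ω) : f k ω ≤ 1 :=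
    hf_sum ω ▸ Finset.single_le_sum (fun j _ ↦ hf_nonneg j ω) (Finset.mem_univ k)
  have hae {ρ : Measure Ω} [IsFiniteMeasure ρ] (k : K) (hk : ∫ ω, f k ω ∂ρ = 0) :
      f k =ᵐ[ρ] 0 :=
    ae_eq_zero_of_integral_eq_zero_of_nonneg_of_le (hf_meas k) (hf_nonneg k) (hf_le_one k) hk
  have hsing : μ ⟂ₘ ν := .of_sum_eq_one hf_meas hf_sum {k | ∫ ω, f k ω ∂μ = 0}
    (fun k hk ↦ hae k (Finset.mem_filter.mp hk).2)
    (fun k hk ↦ hae k ((hdist k).resolve_left (by simpa using hk)))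
  refine ⟨⟨hsing.nullSetᶜ, hsing.measurableSet_nullSet.compl, ?_, hsing.measure_compl_nullSet⟩,
    hsing⟩
  exact (prob_compl_eq_one_iff hsing.measurableSet_nullSet).mpr hsing.measure_nullSet
end

section
/- Let J be a finite index set (of theories) and c : J → ℝ≥0 credences with ∑_{j ∈ J} c_j = 1. For each j ∈ J let (Ω_j, 𝒜_j) be a measurable space, let μ_j and ν_j be probability measures on Ω_j, and let (f_{j,k})_{k ∈ K} be a finite family of measurable functions f_{j,k} : Ω_j → ℝ with f_{j,k} ≥ 0 and ∑_{k ∈ K} f_{j,k}(ω) = 1 for every ω ∈ Ω_j. Define p_k = ∑_{j ∈ J} c_j ∫ f_{j,k} dμ_j and q_k = ∑_{j ∈ J} c_j ∫ f_{j,k} dν_j. If for every k ∈ K, either p_k = 0 or q_k = 0, then for every j ∈ J with c_j > 0 there exists a measurable set Δ ⊆ Ω_j with μ_j(Δ) = 1 and ν_j(Δ) = 0; i.e., μ_j and ν_j are mutually singular. -/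
/-!
Fix a theory `j` with `c j > 0`. Since all terms of `p k` and `q k` are nonnegative, for every
outcome `k` already `∫ f j k ∂μ j = 0` or `∫ f j k ∂ν j = 0`. Split the outcomes accordingly into
`S` and its complement: `G = ∑_{k ∈ S} f j k` vanishes `μ j`-a.e., `H = ∑_{k ∉ S} f j k` vanishes
`ν j`-a.e., and `G + H = 1`. So `{G ≠ 0}` is `μ j`-null while its complement lies in the
`ν j`-null set `{H ≠ 0}`.
-/

open MeasureTheory

lemma eq_zero_of_sum_mul_eq_zero {ι : Type*} [Fintype ι] {c : ι → NNReal} {a : ι → ℝ}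
    (ha : ∀ i, 0 ≤ a i) (h : ∑ i, (c i : ℝ) * a i = 0) {i : ι} (hi : 0 < c i) : a i = 0 := by
  have hterm := (Finset.sum_eq_zero_iff_of_nonneg fun i _ ↦ mul_nonneg (c i).coe_nonneg (ha i)).mp
    h i (Finset.mem_univ i)
  exact (mul_eq_zero.mp hterm).resolve_left (by positivity)

namespace MeasureTheory

variable {Ω : Type*} [MeasurableSpace Ω] {μ ν : Measure Ω}

lemma ae_eq_zero_of_integral_eq_zero_of_le [IsFiniteMeasure μ] {f : Ω → ℝ} (hf : Measurable f)
    (hf_nonneg : 0 ≤ f) {C : ℝ} (hfC : ∀ ω, f ω ≤ C) (h : ∫ ω, f ω ∂μ = 0) : f =ᵐ[μ] 0 := by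
  have hint : Integrable f μ := Integrable.of_bound hf.aestronglyMeasurable C
    (ae_of_all _ fun ω ↦ by rw [Real.norm_of_nonneg (hf_nonneg ω)]; exact hfC ω)
  exact (integral_eq_zero_iff_of_nonneg hf_nonneg hint).mp h

lemma Measure.mutuallySingular_of_add_eq_one {g h : Ω → ℝ} (hg : Measurable g)
    (hgh : ∀ ω, g ω + h ω = 1) (hμ : g =ᵐ[μ] 0) (hν : h =ᵐ[ν] 0) : μ ⟂ₘ ν := by
  refine ⟨{ω | g ω ≠ 0}, hg (measurableSet_singleton 0).compl, ae_iff.mp hμ, ?_⟩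
  refine measure_mono_null (fun ω hω ↦ ?_) (ae_iff.mp hν)
  simp only [Set.mem_compl_iff, Set.mem_ofPred_eq, not_not] at hω
  simp only [Set.mem_ofPred_eq, Pi.zero_apply]
  linarith [hgh ω]

lemma Measure.mutuallySingular_of_forall_integral_eq_zero_or [IsFiniteMeasure μ]
    [IsFiniteMeasure ν] {K : Type*} [Fintype K] {g : K → Ω → ℝ} (hg : ∀ k, Measurable (g k))
    (hg_nonneg : ∀ k ω, 0 ≤ g k ω) (hg_sum : ∀ ω, ∑ k, g k ω = 1)
    (h : ∀ k, ∫ ω, g k ω ∂μ = 0 ∨ ∫ ω, g k ω ∂ν = 0) : μ ⟂ₘ ν := by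
  classical
  have hg_le : ∀ k ω, g k ω ≤ 1 := fun k ω ↦
    hg_sum ω ▸ Finset.single_le_sum (fun k _ ↦ hg_nonneg k ω) (Finset.mem_univ k)
  have hae (π : Measure Ω) [IsFiniteMeasure π] (k : K) (hk : ∫ ω, g k ω ∂π = 0) :
      g k =ᵐ[π] 0 :=
    ae_eq_zero_of_integral_eq_zero_of_le (hg k) (hg_nonneg k) (hg_le k) hk
  have hsum_ae (π : Measure Ω) (S : Finset K) (hS : ∀ k ∈ S, g k =ᵐ[π] 0) :
      (fun ω ↦ ∑ k ∈ S, g k ω) =ᵐ[π] 0 :=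
    ((Finset.eventually_all S).mpr hS).mono fun ω hω ↦ Finset.sum_eq_zero hω
  let S := Finset.univ.filter fun k ↦ ∫ ω, g k ω ∂μ = 0
  refine mutuallySingular_of_add_eq_one (g := fun ω ↦ ∑ k ∈ S, g k ω)
    (h := fun ω ↦ ∑ k ∈ Sᶜ, g k ω) (Finset.measurable_sum S fun k _ ↦ hg k)
    (fun ω ↦ by rw [Finset.sum_add_sum_compl, hg_sum]) ?_ ?_
  · exact hsum_ae μ S fun k hk ↦ hae μ k (Finset.mem_filter.mp hk).2
  · refine hsum_ae ν Sᶜ fun k hk ↦ hae ν k ((h k).resolve_left fun hμk ↦ ?_)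
    exact Finset.mem_compl.mp hk (Finset.mem_filter.mpr ⟨Finset.mem_univ k, hμk⟩)

end MeasureTheory

theorem stmt1_general {J : Type*} [Fintype J] (c : J → NNReal)
    {Ω : J → Type*} [∀ j, MeasurableSpace (Ω j)]
    (μ ν : ∀ j, Measure (Ω j))
    [∀ j, IsProbabilityMeasure (μ j)] [∀ j, IsProbabilityMeasure (ν j)]
    {K : Type*} [Fintype K] (f : ∀ j, K → Ω j → ℝ)
    (hf_meas : ∀ j k, Measurable (f j k))
    (hf_nonneg : ∀ j k ω, 0 ≤ f j k ω)
    (hf_sum : ∀ j ω, ∑ k, f j k ω = 1)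
    (hdist : ∀ k,
      (∑ j, (c j : ℝ) * ∫ ω, f j k ω ∂(μ j)) = 0 ∨
      (∑ j, (c j : ℝ) * ∫ ω, f j k ω ∂(ν j)) = 0) :
    ∀ j, 0 < c j →
      (∃ Δ : Set (Ω j), MeasurableSet Δ ∧ μ j Δ = 1 ∧ ν j Δ = 0) ∧
        (μ j).MutuallySingular (ν j) := by
  intro j hj
  have hvanish : ∀ k, ∫ ω, f j k ω ∂(μ j) = 0 ∨ ∫ ω, f j k ω ∂(ν j) = 0 := fun k ↦
    (hdist k).imp
      (fun h ↦ eq_zero_of_sum_mul_eq_zero (fun i ↦ integral_nonneg (hf_nonneg i k)) h hj)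
      (fun h ↦ eq_zero_of_sum_mul_eq_zero (fun i ↦ integral_nonneg (hf_nonneg i k)) h hj)
  have hsing : μ j ⟂ₘ ν j := Measure.mutuallySingular_of_forall_integral_eq_zero_or
    (hf_meas j) (hf_nonneg j) (hf_sum j) hvanish
  refine ⟨⟨hsing.nullSetᶜ, hsing.measurableSet_nullSet.compl, ?_, hsing.measure_compl_nullSet⟩,
    hsing⟩
  exact (prob_compl_eq_one_iff hsing.measurableSet_nullSet).mpr hsing.measure_nullSet

/-- Theorem 1 of the paper: credences `c j` over finitely many theories, each with its own
ontic state space `Ω j`, state-credences `μ j`, `ν j` under two preparation-acts, and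
act-independent response functions `f j k`.  If the overall act-outcome credences
`p k`, `q k` are R-distinguishable (for each outcome one of them is zero), then on every
theory with nonzero credence the agent takes the effects of the two acts to be ontically
distinct: `μ j` and `ν j` are mutually singular. -/
theorem stmt1 {J : Type*} [Fintype J] (c : J → NNReal) (hc : ∑ j, c j = 1)
    {Ω : J → Type*} [∀ j, MeasurableSpace (Ω j)]
    (μ ν : ∀ j, Measure (Ω j))
    [∀ j, IsProbabilityMeasure (μ j)] [∀ j, IsProbabilityMeasure (ν j)]
    {K : Type*} [Fintype K] (f : ∀ j, K → Ω j → ℝ)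
    (hf_meas : ∀ j k, Measurable (f j k))
    (hf_nonneg : ∀ j k ω, 0 ≤ f j k ω)
    (hf_sum : ∀ j ω, ∑ k, f j k ω = 1)
    (hdist : ∀ k,
      (∑ j, (c j : ℝ) * ∫ ω, f j k ω ∂(μ j)) = 0 ∨
      (∑ j, (c j : ℝ) * ∫ ω, f j k ω ∂(ν j)) = 0) :
    ∀ j, 0 < c j →
      (∃ Δ : Set (Ω j), MeasurableSet Δ ∧ μ j Δ = 1 ∧ ν j Δ = 0) ∧
        (μ j).MutuallySingular (ν j) :=
  stmt1_general c μ ν f hf_meas hf_nonneg hf_sum hdist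
end

section
/- Let n be a finite type, let u, v : n → ℂ be unit vectors (star u ⬝ᵥ u = 1 and star v ⬝ᵥ v = 1), and let (E_k)_{k ∈ K} be a finite family of positive semidefinite matrices E_k : Matrix n n ℂ with ∑_{k ∈ K} E_k = 1 (the identity matrix). If for every k ∈ K, either star u ⬝ᵥ (E_k *ᵥ u) = 0 or star v ⬝ᵥ (E_k *ᵥ v) = 0, then star u ⬝ᵥ v = 0, i.e., u and v are orthogonal. -/
open Matrix
open scoped ComplexOrder

/-! For a positive semidefinite `E`, a vanishing Born probability `⟪u, E u⟫ = 0` forces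
`E u = 0`, so every off-diagonal entry `⟪u, E v⟫` of each POVM element vanishes.
Summing over the outcomes and using `∑ E k = 1` gives `⟪u, v⟫ = 0`. -/

namespace Matrix.PosSemidef

variable {𝕜 n : Type*} [RCLike 𝕜] [Fintype n] {A : Matrix n n 𝕜}

theorem star_dotProduct_mulVec_eq_zero_of_left (hA : A.PosSemidef) {u : n → 𝕜}
    (hu : star u ⬝ᵥ (A *ᵥ u) = 0) (v : n → 𝕜) : star u ⬝ᵥ (A *ᵥ v) = 0 := by
  have hAu : A *ᵥ u = 0 := (hA.dotProduct_mulVec_zero_iff u).mp hu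
  rw [dotProduct_mulVec, ← hA.isHermitian.eq, ← star_mulVec, hAu, star_zero, zero_dotProduct]

theorem star_dotProduct_mulVec_eq_zero_of_right (hA : A.PosSemidef) (u : n → 𝕜) {v : n → 𝕜}
    (hv : star v ⬝ᵥ (A *ᵥ v) = 0) : star u ⬝ᵥ (A *ᵥ v) = 0 := by
  rw [(hA.dotProduct_mulVec_zero_iff v).mp hv, dotProduct_zero]

end Matrix.PosSemidef

theorem stmt2_general {n : Type*} [Fintype n] [DecidableEq n]
    (u v : n → ℂ)
    {K : Type*} [Fintype K] (E : K → Matrix n n ℂ)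
    (hE_pos : ∀ k, (E k).PosSemidef) (hE_sum : ∑ k, E k = 1)
    (hdist : ∀ k, star u ⬝ᵥ (E k *ᵥ u) = 0 ∨ star v ⬝ᵥ (E k *ᵥ v) = 0) :
    star u ⬝ᵥ v = 0 := by
  have hoff (k : K) : star u ⬝ᵥ (E k *ᵥ v) = 0 :=
    (hdist k).elim (fun hu => (hE_pos k).star_dotProduct_mulVec_eq_zero_of_left hu v)
      (fun hv => (hE_pos k).star_dotProduct_mulVec_eq_zero_of_right u hv)
  calc star u ⬝ᵥ v = star u ⬝ᵥ ((∑ k, E k) *ᵥ v) := by rw [hE_sum, one_mulVec]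
    _ = ∑ k, star u ⬝ᵥ (E k *ᵥ v) := by rw [sum_mulVec, dotProduct_sum]
    _ = 0 := Finset.sum_eq_zero fun k _ => hoff k

/-- If two pure states (unit vectors `u`, `v`) are distinguishable by a POVM
`(E k)` (for each outcome, at least one of the two Born probabilities vanishes),
then the states are orthogonal. -/
theorem stmt2 {n : Type*} [Fintype n] [DecidableEq n]
    (u v : n → ℂ) (hu : star u ⬝ᵥ u = 1) (hv : star v ⬝ᵥ v = 1)
    {K : Type*} [Fintype K] (E : K → Matrix n n ℂ)
    (hE_pos : ∀ k, (E k).PosSemidef) (hE_sum : ∑ k, E k = 1)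
    (hdist : ∀ k, star u ⬝ᵥ (E k *ᵥ u) = 0 ∨ star v ⬝ᵥ (E k *ᵥ v) = 0) :
    star u ⬝ᵥ v = 0 :=
  stmt2_general u v E hE_pos hE_sum hdist
end

section
/- Let (Ω, 𝒜) be a measurable space, let μ and ν be probability measures on Ω, and let f_0, f_1, f_2, f_3 : Ω × Ω → ℝ be measurable functions with f_i ≥ 0 and f_0 + f_1 + f_2 + f_3 = 1 pointwise. Suppose ∫ f_0 d(μ × μ) = 0, ∫ f_1 d(μ × ν) = 0, ∫ f_2 d(ν × μ) = 0, and ∫ f_3 d(ν × ν) = 0, where μ × ν denotes the product measure on Ω × Ω. Then μ and ν are mutually singular. -/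
/-!
A nonnegative bounded response with zero integral against a product measure vanishes on almost
every row, so the four hypotheses say: for `μ`-a.e. `x` the row `f (x, ·)` has `f0 = 0` `μ`-a.e.
and `f1 = 0` `ν`-a.e., and for `ν`-a.e. `x` it has `f2 = 0` `μ`-a.e. and `f3 = 0` `ν`-a.e.
If `μ` and `ν` were not singular, some `x` would be typical for both; along that row
`f0 = f2 = 0` holds `μ`-a.e. and `f1 = f3 = 0` holds `ν`-a.e., and since the four responses sum
to `1` these two events are disjoint, so `μ ⟂ₘ ν` after all.
-/

open MeasureTheory

namespace MeasureTheory.Measure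

variable {α β : Type*} [MeasurableSpace α] [MeasurableSpace β]

lemma mutuallySingular_of_ae_of_ae {μ ν : Measure α} {P Q : α → Prop}
    (hP : ∀ᵐ x ∂μ, P x) (hQ : ∀ᵐ x ∂ν, Q x) (hPQ : ∀ x, P x → ¬ Q x) : μ ⟂ₘ ν :=
  mutuallySingular_iff_disjoint_ae.mpr
    (Filter.disjoint_of_disjoint_of_mem (Set.disjoint_left.mpr hPQ) hP hQ)

lemma ae_ae_eq_zero_of_integral_prod_eq_zero {μ : Measure α} {ν : Measure β}
    [IsFiniteMeasure μ] [IsFiniteMeasure ν] {f : α × β → ℝ} {C : ℝ}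
    (hf : AEStronglyMeasurable f (μ.prod ν))
    (h0 : ∀ p, 0 ≤ f p) (hC : ∀ p, f p ≤ C) (hE : ∫ p, f p ∂(μ.prod ν) = 0) :
    ∀ᵐ x ∂μ, ∀ᵐ y ∂ν, f (x, y) = 0 := by
  have hint : Integrable f (μ.prod ν) :=
    .of_bound hf C (.of_forall fun p => (Real.norm_of_nonneg (h0 p)).le.trans (hC p))
  exact ae_ae_of_ae_prod ((integral_eq_zero_iff_of_nonneg h0 hint).mp hE)

end MeasureTheory.Measure

/-- Measure-theoretic core of the PBR argument under the Preparation Independence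
Postulate: if the four product-measure preparations are antidistinguishable by a
four-outcome measurement with response functions `f0, f1, f2, f3`, then `μ` and `ν`
are mutually singular. -/
theorem stmt3 {Ω : Type*} [MeasurableSpace Ω] (μ ν : Measure Ω)
    [IsProbabilityMeasure μ] [IsProbabilityMeasure ν]
    (f0 f1 f2 f3 : Ω × Ω → ℝ)
    (hf0 : Measurable f0) (hf1 : Measurable f1) (hf2 : Measurable f2) (hf3 : Measurable f3)
    (h0 : ∀ p, 0 ≤ f0 p) (h1 : ∀ p, 0 ≤ f1 p) (h2 : ∀ p, 0 ≤ f2 p) (h3 : ∀ p, 0 ≤ f3 p)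
    (hsum : ∀ p, f0 p + f1 p + f2 p + f3 p = 1)
    (hE0 : (∫ p, f0 p ∂(μ.prod μ)) = 0)
    (hE1 : (∫ p, f1 p ∂(μ.prod ν)) = 0)
    (hE2 : (∫ p, f2 p ∂(ν.prod μ)) = 0)
    (hE3 : (∫ p, f3 p ∂(ν.prod ν)) = 0) :
    μ.MutuallySingular ν := by
  have hle : ∀ p, f0 p ≤ 1 ∧ f1 p ≤ 1 ∧ f2 p ≤ 1 ∧ f3 p ≤ 1 := fun p => by
    have := hsum p; have := h0 p; have := h1 p; have := h2 p; have := h3 p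
    refine ⟨?_, ?_, ?_, ?_⟩ <;> linarith
  have hμμ := Measure.ae_ae_eq_zero_of_integral_prod_eq_zero hf0.aestronglyMeasurable h0
    (fun p => (hle p).1) hE0
  have hμν := Measure.ae_ae_eq_zero_of_integral_prod_eq_zero hf1.aestronglyMeasurable h1
    (fun p => (hle p).2.1) hE1
  have hνμ := Measure.ae_ae_eq_zero_of_integral_prod_eq_zero hf2.aestronglyMeasurable h2
    (fun p => (hle p).2.2.1) hE2
  have hνν := Measure.ae_ae_eq_zero_of_integral_prod_eq_zero hf3.aestronglyMeasurable h3
    (fun p => (hle p).2.2.2) hE3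
  by_contra hsing
  obtain ⟨x, ⟨hx0, hx1⟩, hx2, hx3⟩ : ∃ x,
      ((∀ᵐ y ∂μ, f0 (x, y) = 0) ∧ ∀ᵐ y ∂ν, f1 (x, y) = 0) ∧
      ((∀ᵐ y ∂μ, f2 (x, y) = 0) ∧ ∀ᵐ y ∂ν, f3 (x, y) = 0) := by
    by_contra hnone
    exact hsing <| Measure.mutuallySingular_of_ae_of_ae (hμμ.and hμν) (hνμ.and hνν)
      fun x hP hQ => hnone ⟨x, hP, hQ⟩
  refine hsing <| Measure.mutuallySingular_of_ae_of_ae (hx0.and hx2) (hx1.and hx3) ?_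
  rintro y ⟨hy0, hy2⟩ ⟨hy1, hy3⟩
  have hsum_xy := hsum (x, y)
  rw [hy0, hy1, hy2, hy3] at hsum_xy
  norm_num at hsum_xy
end

section
/- Let u, v : Fin 2 → ℂ be unit vectors with ‖star u ⬝ᵥ v‖ ≤ 1/√2. For x, y ∈ {u, v} define w(x, y) : Fin 2 × Fin 2 → ℂ by w(x, y)(i, j) = x(i) · y(j). Then there exist positive semidefinite matrices E_0, E_1, E_2, E_3 : Matrix (Fin 2 × Fin 2) (Fin 2 × Fin 2) ℂ with E_0 + E_1 + E_2 + E_3 = 1 (the identity matrix) such that star w(u,u) ⬝ᵥ (E_0 *ᵥ w(u,u)) = 0, star w(u,v) ⬝ᵥ (E_1 *ᵥ w(u,v)) = 0, star w(v,u) ⬝ᵥ (E_2 *ᵥ w(v,u)) = 0, and star w(v,v) ⬝ᵥ (E_3 *ᵥ w(v,v)) = 0. -/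
open Matrix
open scoped ComplexOrder

/-- The product state `x ⊗ y` of two qubits, as a vector on `Fin 2 × Fin 2`. -/
def prodState (x y : Fin 2 → ℂ) : Fin 2 × Fin 2 → ℂ := fun p => x p.1 * y p.2

/-!
After a unitary change of basis and a phase, `u = c|0⟩ + s|1⟩` and `v = c|0⟩ - s|1⟩` with
`c² - s² = |⟨u|v⟩|`. In these coordinates measure in the orthonormal basis given by the rows of
`(H ⊗ H) · diag Z`, with `H` the Hadamard gate and `Z` a diagonal of unit phases. Row `(x, y)` of
`H ⊗ H` carries exactly the signs that distinguish the `(x, y)`-th product state, so every state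
has the same amplitude `(Z₀₀ c² + (Z₀₁ + Z₁₀) c s + Z₁₁ s²) / 2` on its own outcome. It vanishes
once the phases close a triangle with sides `c²`, `2 c s`, `s²`, which is possible exactly when
`c² - s² ≤ 2 c s`, i.e. when `|⟨u|v⟩| ≤ 1/√2`.
-/

open scoped Kronecker

/-- A projective measurement in the basis given by the rows of a unitary `M`. -/
theorem exists_povm_of_unitary {n : Type*} [Fintype n] [DecidableEq n] {M : Matrix n n ℂ}
    (hM : M ∈ unitaryGroup n ℂ) {ψ : n → n → ℂ} (hψ : ∀ k, (M *ᵥ ψ k) k = 0) :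
    ∃ E : n → Matrix n n ℂ, (∀ k, (E k).PosSemidef) ∧ ∑ k, E k = 1 ∧
      ∀ k, star (ψ k) ⬝ᵥ (E k *ᵥ ψ k) = 0 := by
  refine ⟨fun k => vecMulVec (star (M k)) (M k), fun k => posSemidef_vecMulVec_star_self _,
    ?_, fun k => ?_⟩
  · rw [← mem_unitaryGroup_iff'.mp hM]
    ext i j
    simp [vecMulVec_apply, mul_apply, Matrix.sum_apply, star_apply]
  · rw [vecMulVec_mulVec, show M k ⬝ᵥ ψ k = 0 from hψ k, MulOpposite.op_zero, zero_smul,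
      dotProduct_zero]

theorem of_star_mem_unitaryGroup {n : Type*} [Fintype n] [DecidableEq n] {e : n → n → ℂ}
    (he : ∀ i j, star (e i) ⬝ᵥ e j = (1 : Matrix n n ℂ) i j) :
    Matrix.of (fun i => star (e i)) ∈ unitaryGroup n ℂ := by
  rw [mem_unitaryGroup_iff]
  ext i j
  rw [mul_apply', ← he]
  simp [star_apply]
  rfl

theorem diagonal_mem_unitaryGroup {n : Type*} [Fintype n] [DecidableEq n] {z : n → ℂ}
    (hz : ∀ i, ‖z i‖ = 1) : diagonal z ∈ unitaryGroup n ℂ := by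
  rw [mem_unitaryGroup_iff', star_eq_conjTranspose, diagonal_conjTranspose, diagonal_mul_diagonal,
    ← diagonal_one]
  congr 1
  ext i
  simp [← Complex.normSq_eq_conj_mul_self, Complex.normSq_eq_norm_sq, hz]

theorem kronecker_mulVec_prodState (A B : Matrix (Fin 2) (Fin 2) ℂ) (x y : Fin 2 → ℂ) :
    (A ⊗ₖ B) *ᵥ prodState x y = prodState (A *ᵥ x) (B *ᵥ y) := by
  ext ⟨i, j⟩
  simp only [mulVec, dotProduct, prodState, kroneckerMap_apply, Fintype.sum_prod_type,
    Finset.sum_mul_sum]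
  refine Finset.sum_congr rfl fun k _ => Finset.sum_congr rfl fun l _ => by ring

theorem Complex.exists_norm_eq_one_triangle {p q r : ℝ} (hp : 0 < p) (hq : 0 < q) (hr : 0 < r)
    (hpq : p ≤ q + r) (hqr : q ≤ p + r) (hrp : r ≤ p + q) :
    ∃ z₁ z₂ z₃ : ℂ, ‖z₁‖ = 1 ∧ ‖z₂‖ = 1 ∧ ‖z₃‖ = 1 ∧ p * z₁ + q * z₂ + r * z₃ = 0 := by
  -- `x + y i` is the apex of the triangle with base `[0, p]` and sides `q`, `r`.
  set x := (p ^ 2 + q ^ 2 - r ^ 2) / (2 * p) with hx_def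
  have hpx : 2 * p * x = p ^ 2 + q ^ 2 - r ^ 2 := by rw [hx_def]; field_simp
  have hx : x ^ 2 ≤ q ^ 2 := by
    have heron : 0 ≤ (q + r - p) * (p + r - q) * (p + q - r) * (p + q + r) := by
      have := add_pos (add_pos hp hq) hr
      apply mul_nonneg (mul_nonneg (mul_nonneg _ _) _) <;> linarith
    have : (2 * p) ^ 2 * x ^ 2 ≤ (2 * p) ^ 2 * q ^ 2 := by
      rw [← mul_pow, hpx]; nlinarith
    exact le_of_mul_le_mul_left this (by positivity)
  set y := √(q ^ 2 - x ^ 2)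
  have hy : y ^ 2 = q ^ 2 - x ^ 2 := Real.sq_sqrt (by linarith)
  refine ⟨-1, ⟨x, y⟩ / q, ⟨p - x, -y⟩ / r, by simp, ?_, ?_, ?_⟩
  · rw [norm_div, Complex.norm_real, Real.norm_of_nonneg hq.le, div_eq_one_iff_eq hq.ne',
      Complex.norm_def, Complex.normSq_mk, ← sq, ← sq, hy, add_sub_cancel, Real.sqrt_sq hq.le]
  · rw [norm_div, Complex.norm_real, Real.norm_of_nonneg hr.le, div_eq_one_iff_eq hr.ne',
      Complex.norm_def, Complex.normSq_mk, ← sq, ← sq, neg_sq, hy, ← Real.sqrt_sq hr.le]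
    congr 1
    linear_combination -hpx
  · rw [mul_div_cancel₀ _ (Complex.ofReal_ne_zero.2 hq.ne'),
      mul_div_cancel₀ _ (Complex.ofReal_ne_zero.2 hr.ne')]
    apply Complex.ext <;> simp

noncomputable def hadamardGate : Matrix (Fin 2) (Fin 2) ℂ := ((√2 : ℝ) : ℂ)⁻¹ • !![1, 1; 1, -1]

theorem ofReal_sqrt_two_inv_mul_self : ((√2 : ℝ) : ℂ)⁻¹ * ((√2 : ℝ) : ℂ)⁻¹ = 2⁻¹ := by
  rw [← mul_inv, ← Complex.ofReal_mul, Real.mul_self_sqrt zero_le_two]; norm_num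

theorem hadamardGate_mem_unitaryGroup : hadamardGate ∈ unitaryGroup (Fin 2) ℂ := by
  rw [mem_unitaryGroup_iff]
  ext i j
  fin_cases i <;> fin_cases j <;> simp [hadamardGate, mul_apply, ofReal_sqrt_two_inv_mul_self] <;>
    norm_num

theorem hadamardGate_kronecker_mul_diagonal_mulVec_apply (Z : Fin 2 × Fin 2 → ℂ)
    (c s α β : ℂ) (x y : Fin 2) :
    (((hadamardGate ⊗ₖ hadamardGate) * diagonal Z) *ᵥ
        prodState (α • ![![c, s], ![c, -s]] x) (β • ![![c, s], ![c, -s]] y)) (x, y) =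
      α * β * (∑ p, Z p * prodState ![c, s] ![c, s] p) / 2 := by
  rw [← mulVec_mulVec]
  fin_cases x <;> fin_cases y <;>
    simp [hadamardGate, mulVec, dotProduct, Fintype.sum_prod_type, prodState, diagonal] <;>
    simp only [ofReal_sqrt_two_inv_mul_self] <;> ring

theorem exists_unitary_mulVec_prodState_apply_eq_zero {c s : ℝ} (hc : 0 < c) (hs : 0 < s)
    (h : |c ^ 2 - s ^ 2| ≤ 2 * c * s) :
    ∃ M ∈ unitaryGroup (Fin 2 × Fin 2) ℂ, ∀ (α β : ℂ) (x y : Fin 2),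
      (M *ᵥ prodState (α • ![![(c : ℂ), s], ![(c : ℂ), -s]] x)
        (β • ![![(c : ℂ), s], ![(c : ℂ), -s]] y)) (x, y) = 0 := by
  obtain ⟨z₁, z₂, z₃, h₁, h₂, h₃, hz⟩ := Complex.exists_norm_eq_one_triangle
    (p := c ^ 2) (q := 2 * c * s) (r := s ^ 2) (by positivity) (by positivity) (by positivity)
    (by linarith [le_abs_self (c ^ 2 - s ^ 2)]) (by nlinarith [sq_nonneg (c - s)])
    (by linarith [neg_abs_le (c ^ 2 - s ^ 2)])
  set Z : Fin 2 × Fin 2 → ℂ := fun p => ![![z₁, z₂], ![z₂, z₃]] p.1 p.2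
  have hZ : ∑ p, Z p * prodState ![(c : ℂ), s] ![(c : ℂ), s] p = 0 := by
    push_cast at hz
    simp [Z, Fintype.sum_prod_type, prodState]
    linear_combination hz
  refine ⟨(hadamardGate ⊗ₖ hadamardGate) * diagonal Z,
    mul_mem (kronecker_mem_unitary hadamardGate_mem_unitaryGroup hadamardGate_mem_unitaryGroup)
      (diagonal_mem_unitaryGroup ?_), fun α β x y => ?_⟩
  · rintro ⟨i, j⟩
    fin_cases i <;> fin_cases j <;> simpa [Z]
  · rw [hadamardGate_kronecker_mul_diagonal_mulVec_apply, hZ, mul_zero, zero_div]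

theorem exists_unitary_mulVec_eq_of_dotProduct_eq {u v : Fin 2 → ℂ} (hu : star u ⬝ᵥ u = 1)
    (hv : star v ⬝ᵥ v = 1) {c s : ℝ} (hc : 0 < c) (hs : 0 < s) (hcs : c ^ 2 + s ^ 2 = 1)
    (huv : star u ⬝ᵥ v = (c ^ 2 - s ^ 2 : ℝ)) :
    ∃ V ∈ unitaryGroup (Fin 2) ℂ, V *ᵥ u = ![(c : ℂ), s] ∧ V *ᵥ v = ![(c : ℂ), -s] := by
  have hvu : star v ⬝ᵥ u = (c ^ 2 - s ^ 2 : ℝ) := by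
    rw [star_dotProduct, huv, Complex.star_def, Complex.conj_ofReal]
  have hc' : (c : ℂ) ≠ 0 := Complex.ofReal_ne_zero.2 hc.ne'
  have hs' : (s : ℂ) ≠ 0 := Complex.ofReal_ne_zero.2 hs.ne'
  replace hcs : (c : ℂ) ^ 2 + (s : ℂ) ^ 2 = 1 := by exact_mod_cast hcs
  rw [← hcs] at hu hv
  push_cast at huv hvu
  -- `u + v ⊥ u - v` because `⟨u|v⟩` is real.
  let e : Fin 2 → Fin 2 → ℂ := ![(2 * c : ℂ)⁻¹ • (u + v), (2 * s : ℂ)⁻¹ • (u - v)]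
  have he₀ (w : Fin 2 → ℂ) : star (e 0) ⬝ᵥ w = (star u ⬝ᵥ w + star v ⬝ᵥ w) / (2 * c) := by
    simp [e, star_smul, add_dotProduct, div_eq_inv_mul]; ring
  have he₁ (w : Fin 2 → ℂ) : star (e 1) ⬝ᵥ w = (star u ⬝ᵥ w - star v ⬝ᵥ w) / (2 * s) := by
    simp [e, star_smul, sub_dotProduct, div_eq_inv_mul]
  have he₀' (w : Fin 2 → ℂ) : star w ⬝ᵥ e 0 = (star w ⬝ᵥ u + star w ⬝ᵥ v) / (2 * c) := by
    simp [e, dotProduct_add, div_eq_inv_mul]; ring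
  have he₁' (w : Fin 2 → ℂ) : star w ⬝ᵥ e 1 = (star w ⬝ᵥ u - star w ⬝ᵥ v) / (2 * s) := by
    simp [e, dotProduct_sub, div_eq_inv_mul]
  have hV (w : Fin 2 → ℂ) :
      (Matrix.of fun i => star (e i)) *ᵥ w = ![star (e 0) ⬝ᵥ w, star (e 1) ⬝ᵥ w] := by
    ext i; fin_cases i <;> rfl
  have h₀₀ : star (e 0) ⬝ᵥ e 0 = 1 := by rw [he₀, he₀', he₀', hu, hv, huv, hvu]; field_simp; ring
  have h₀₁ : star (e 0) ⬝ᵥ e 1 = 0 := by rw [he₀, he₁', he₁', hu, hv, huv, hvu]; ring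
  have h₁₀ : star (e 1) ⬝ᵥ e 0 = 0 := by rw [he₁, he₀', he₀', hu, hv, huv, hvu]; ring
  have h₁₁ : star (e 1) ⬝ᵥ e 1 = 1 := by rw [he₁, he₁', he₁', hu, hv, huv, hvu]; field_simp; ring
  refine ⟨Matrix.of fun i => star (e i), of_star_mem_unitaryGroup fun i j => ?_, ?_, ?_⟩
  · fin_cases i <;> fin_cases j <;> simp [h₀₀, h₀₁, h₁₀, h₁₁]
  · rw [hV, he₀, he₁, hu, hvu]; congr 2 <;> field_simp <;> ring
  · rw [hV, he₀, he₁, hv, huv]; congr 2 <;> field_simp <;> ring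

theorem exists_unitary_mulVec_eq {u v : Fin 2 → ℂ} (hu : star u ⬝ᵥ u = 1)
    (hv : star v ⬝ᵥ v = 1) {c s : ℝ} (hc : 0 < c) (hs : 0 < s) (hcs : c ^ 2 + s ^ 2 = 1)
    (huv : ‖star u ⬝ᵥ v‖ = c ^ 2 - s ^ 2) :
    ∃ V ∈ unitaryGroup (Fin 2) ℂ, ∃ ω : ℂ,
      V *ᵥ u = ![(c : ℂ), s] ∧ V *ᵥ v = ω • ![(c : ℂ), -s] := by
  set ω := Complex.exp ((star u ⬝ᵥ v).arg * Complex.I)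
  have hω : ω ≠ 0 := Complex.exp_ne_zero _
  have hω' : star ω⁻¹ * ω⁻¹ = 1 := by
    rw [Complex.star_def, Complex.conj_mul', norm_inv, Complex.norm_exp_ofReal_mul_I]; simp
  obtain ⟨V, hV, hVu, hVv⟩ := exists_unitary_mulVec_eq_of_dotProduct_eq (v := ω⁻¹ • v) hu
    (by rw [star_smul, smul_dotProduct, dotProduct_smul, hv, smul_eq_mul, smul_eq_mul, mul_one,
      ← hω'])
    hc hs hcs (by
      rw [dotProduct_smul, smul_eq_mul, ← huv]
      nth_rw 1 [← Complex.norm_mul_exp_arg_mul_I (star u ⬝ᵥ v)]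
      exact (congrArg _ (mul_comm _ _)).trans (inv_mul_cancel_left₀ hω _))
  refine ⟨V, hV, ω, hVu, ?_⟩
  rw [← hVv, mulVec_smul, smul_inv_smul₀ hω]

theorem exists_half_angle_of_sq_le_half {t : ℝ} (ht : t ^ 2 ≤ 1 / 2) :
    ∃ c s : ℝ, 0 < c ∧ 0 < s ∧ c ^ 2 + s ^ 2 = 1 ∧ c ^ 2 - s ^ 2 = t ∧
      |c ^ 2 - s ^ 2| ≤ 2 * c * s := by
  have ht₁ : -1 < t := by nlinarith
  have ht₂ : t < 1 := by nlinarith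
  have hc : ((√((1 + t) / 2)) : ℝ) ^ 2 = (1 + t) / 2 := Real.sq_sqrt (by linarith)
  have hs : ((√((1 - t) / 2)) : ℝ) ^ 2 = (1 - t) / 2 := Real.sq_sqrt (by linarith)
  refine ⟨√((1 + t) / 2), √((1 - t) / 2), Real.sqrt_pos.2 (by linarith),
    Real.sqrt_pos.2 (by linarith), by rw [hc, hs]; ring, by rw [hc, hs]; ring,
    abs_le_of_sq_le_sq ?_ (by positivity)⟩
  rw [mul_pow, mul_pow, hc, hs]
  nlinarith

/-- Antidistinguishability of the four product states: if two pure qubit states `u`, `v`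
have overlap `|⟨u|v⟩| ≤ 1/√2`, then there is a four-outcome POVM on the two-qubit space
such that each outcome has Born probability zero on the corresponding product state
`u⊗u`, `u⊗v`, `v⊗u`, `v⊗v`. -/
theorem stmt5 (u v : Fin 2 → ℂ) (hu : star u ⬝ᵥ u = 1) (hv : star v ⬝ᵥ v = 1)
    (hover : ‖star u ⬝ᵥ v‖ ≤ 1 / Real.sqrt 2) :
    ∃ E0 E1 E2 E3 : Matrix (Fin 2 × Fin 2) (Fin 2 × Fin 2) ℂ,
      E0.PosSemidef ∧ E1.PosSemidef ∧ E2.PosSemidef ∧ E3.PosSemidef ∧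
      E0 + E1 + E2 + E3 = 1 ∧
      star (prodState u u) ⬝ᵥ (E0 *ᵥ prodState u u) = 0 ∧
      star (prodState u v) ⬝ᵥ (E1 *ᵥ prodState u v) = 0 ∧
      star (prodState v u) ⬝ᵥ (E2 *ᵥ prodState v u) = 0 ∧
      star (prodState v v) ⬝ᵥ (E3 *ᵥ prodState v v) = 0 := by
  have hover2 : ‖star u ⬝ᵥ v‖ ^ 2 ≤ 1 / 2 := by
    calc ‖star u ⬝ᵥ v‖ ^ 2 ≤ (1 / √2) ^ 2 := pow_le_pow_left₀ (norm_nonneg _) hover 2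
      _ = 1 / 2 := by rw [div_pow, one_pow, Real.sq_sqrt zero_le_two]
  obtain ⟨c, s, hc, hs, hcs, hcst, htri⟩ :=
    exists_half_angle_of_sq_le_half hover2
  obtain ⟨V, hV, ω, hVu, hVv⟩ := exists_unitary_mulVec_eq hu hv hc hs hcs hcst.symm
  obtain ⟨M, hM, hMψ⟩ := exists_unitary_mulVec_prodState_apply_eq_zero hc hs htri
  have hVψ (x : Fin 2) : V *ᵥ ![u, v] x = ![1, ω] x • ![![(c : ℂ), s], ![(c : ℂ), -s]] x := by
    fin_cases x <;> simp [hVu, hVv]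
  obtain ⟨E, hE, hsum, hborn⟩ := exists_povm_of_unitary (mul_mem hM (kronecker_mem_unitary hV hV))
    (ψ := fun k => prodState (![u, v] k.1) (![u, v] k.2)) fun ⟨x, y⟩ => by
      rw [← mulVec_mulVec, kronecker_mulVec_prodState, hVψ, hVψ]
      exact hMψ _ _ x y
  refine ⟨E (0, 0), E (0, 1), E (1, 0), E (1, 1), hE _, hE _, hE _, hE _, ?_,
    hborn (0, 0), hborn (0, 1), hborn (1, 0), hborn (1, 1)⟩
  simpa [Fintype.sum_prod_type, add_assoc] using hsum
end

section
/- Let (Ω, 𝒜) be a measurable space and let P be a probability measure on Bool × Bool × Ω, with coordinate maps A(a,b,ω) = a, B(a,b,ω) = b, Λ(a,b,ω) = ω. Assume: (i) the pushforward of P under (A, B) assigns probability 1/4 to each of the four pairs in Bool × Bool; (ii) there are measurable functions f_0, f_1, f_2, f_3 : Ω → ℝ with f_k ≥ 0 and f_0 + f_1 + f_2 + f_3 = 1 pointwise, such that ∫_{\{A = a_k, B = b_k\}} f_k(Λ) dP = 0 for each k, where (a_0,b_0) = (ff,ff), (a_1,b_1) = (ff,tt), (a_2,b_2) = (tt,ff),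 (a_3,b_3) = (tt,tt); (iii) A and B are conditionally independent given the σ-algebra generated by Λ. Then P-almost surely, the conditional probability of {A = tt} given the σ-algebra generated by Λ takes a value in {0, 1}, or the conditional probability of {B = tt} given the σ-algebra generated by Λ takes a value in {0, 1}. -/
/-!
If `A` and `B` are conditionally independent given `Λ`, the conditional probability of
`{A = a_k, B = b_k}` given `Λ` factors as `P(A = a_k | Λ) P(B = b_k | Λ)`. Antidistinguishability
says that `f_k(Λ) ≥ 0` integrates to zero over that event, i.e.
`f_k(Λ) P(A = a_k | Λ) P(B = b_k | Λ) = 0` almost surely. Since the `f_k` sum to one, at almost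
every point some `f_k(Λ)` is nonzero, so one of the two conditional probabilities vanishes there;
as `P(A = ff | Λ) = 1 - P(A = tt | Λ)`, this forces `P(A = tt | Λ)` or `P(B = tt | Λ)` into
`{0, 1}`.
-/

open MeasureTheory ProbabilityTheory

/-- The σ-algebra generated by the ontic-state coordinate `Λ(a,b,ω) = ω` on
`Bool × Bool × Ω`. -/
def sigmaLambda (Ω : Type*) [MeasurableSpace Ω] : MeasurableSpace (Bool × Bool × Ω) :=
  MeasurableSpace.comap (fun p => p.2.2) inferInstance

theorem sigmaLambda_le (Ω : Type*) [MeasurableSpace Ω] :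
    sigmaLambda Ω ≤ (inferInstance : MeasurableSpace (Bool × Bool × Ω)) :=
  (measurable_snd.snd).comap_le

/-- The four preparation pairs `(a_k, b_k)` for the four readout outcomes. -/
def prepPair : Fin 4 → Bool × Bool :=
  ![(false, false), (false, true), (true, false), (true, true)]

section CondProb

variable {α : Type*} {m m₀ : MeasurableSpace α} {μ : Measure α} [IsFiniteMeasure μ]

theorem condExp_indicator_compl_ae_eq (hm : m ≤ m₀) {s : Set α} (hs : MeasurableSet s) :
    μ⟦sᶜ | m⟧ =ᵐ[μ] 1 - μ⟦s | m⟧ := by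
  rw [Set.indicator_compl]
  filter_upwards [condExp_sub (integrable_const (1 : ℝ)) ((integrable_const 1).indicator hs) m]
    with x hx
  rw [hx, Pi.sub_apply, condExp_const hm]
  rfl

theorem ae_condExp_preimage_true_mem_zero_one_of_eq_zero (hm : m ≤ m₀) {g : α → Bool}
    (hg : Measurable g) :
    ∀ᵐ x ∂μ, ∀ c, (μ⟦g ⁻¹' {c} | m⟧) x = 0 →
      (μ⟦g ⁻¹' {true} | m⟧) x ∈ ({0, 1} : Set ℝ) := by
  have hfalse : g ⁻¹' {false} = (g ⁻¹' {true})ᶜ := by ext; simp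
  filter_upwards [condExp_indicator_compl_ae_eq (μ := μ) hm (hg (measurableSet_singleton true))]
    with x hx
  rintro (_ | _) hc
  · rw [← hfalse, hc, Pi.sub_apply, Pi.one_apply, eq_comm, sub_eq_zero] at hx
    exact Or.inr hx.symm
  · exact Or.inl hc

theorem mul_condExp_indicator_ae_eq_zero_of_setIntegral_eq_zero (hm : m ≤ m₀) {g : α → ℝ}
    {s : Set α} (hg : StronglyMeasurable[m] g) (hg_int : Integrable g μ) (hg_nonneg : 0 ≤ᵐ[μ] g)
    (hs : MeasurableSet s) (h : ∫ x in s, g x ∂μ = 0) :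
    g * μ⟦s | m⟧ =ᵐ[μ] 0 := by
  have hind : g * s.indicator (fun _ => (1 : ℝ)) = s.indicator g := by
    ext x
    by_cases hx : x ∈ s <;> simp [hx]
  have hpull : μ[s.indicator g | m] =ᵐ[μ] g * μ⟦s | m⟧ := by
    rw [← hind]
    exact condExp_mul_of_stronglyMeasurable_left hg (hind ▸ hg_int.indicator hs)
      ((integrable_const 1).indicator hs)
  have hint : ∫ x, (g * μ⟦s | m⟧) x ∂μ = 0 := by
    rw [← integral_congr_ae hpull, integral_condExp hm, integral_indicator hs, h]
  have hnonneg : 0 ≤ᵐ[μ] g * μ⟦s | m⟧ := by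
    filter_upwards [hg_nonneg, condExp_nonneg (μ := μ) (m := m)
      (.of_forall (Set.indicator_nonneg fun _ _ => zero_le_one (α := ℝ)))] with x h₁ h₂
    exact mul_nonneg h₁ h₂
  exact (integral_eq_zero_iff_of_nonneg_ae hnonneg (integrable_condExp.congr hpull)).mp hint

theorem ProbabilityTheory.CondIndepFun.mul_condExp_mul_ae_eq_zero_of_setIntegral_eq_zero
    [StandardBorelSpace α] {β γ : Type*} [MeasurableSpace β] [MeasurableSpace γ] {hm : m ≤ m₀}
    {X : α → β} {Y : α → γ} (hXY : CondIndepFun m hm X Y μ) (hX : Measurable X)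
    (hY : Measurable Y) {s : Set β} {t : Set γ} (hs : MeasurableSet s) (ht : MeasurableSet t)
    {g : α → ℝ} (hg : StronglyMeasurable[m] g) (hg_int : Integrable g μ) (hg_nonneg : 0 ≤ᵐ[μ] g)
    (h : ∫ x in X ⁻¹' s ∩ Y ⁻¹' t, g x ∂μ = 0) :
    ∀ᵐ x ∂μ, g x * ((μ⟦X ⁻¹' s | m⟧) x * (μ⟦Y ⁻¹' t | m⟧) x) = 0 := by
  filter_upwards [mul_condExp_indicator_ae_eq_zero_of_setIntegral_eq_zero hm hg hg_int hg_nonneg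
      ((hX hs).inter (hY ht)) h,
    (condIndepFun_iff_condExp_inter_preimage_eq_mul hX hY).mp hXY s t hs ht] with x hx hfactor
  rw [← hfactor]
  exact hx

end CondProb

theorem stmt6_general {Ω : Type*} [MeasurableSpace Ω] [StandardBorelSpace Ω]
    (P : Measure (Bool × Bool × Ω)) [IsProbabilityMeasure P]
    (f : Fin 4 → Ω → ℝ)
    (hf_meas : ∀ k, Measurable (f k))
    (hf_nonneg : ∀ k ω, 0 ≤ f k ω)
    (hf_sum : ∀ ω, ∑ k, f k ω = 1)
    (hanti : ∀ k, (∫ p in {p : Bool × Bool × Ω |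
        p.1 = (prepPair k).1 ∧ p.2.1 = (prepPair k).2}, f k p.2.2 ∂P) = 0)
    (hPUC : CondIndepFun (sigmaLambda Ω) (sigmaLambda_le Ω)
      (fun p : Bool × Bool × Ω => p.1) (fun p : Bool × Bool × Ω => p.2.1) P) :
    ∀ᵐ p ∂P,
      (MeasureTheory.condExp (sigmaLambda Ω) P
          (Set.indicator {q : Bool × Bool × Ω | q.1 = true} (fun _ => (1 : ℝ))) p
        ∈ ({0, 1} : Set ℝ)) ∨
      (MeasureTheory.condExp (sigmaLambda Ω) P
          (Set.indicator {q : Bool × Bool × Ω | q.2.1 = true} (fun _ => (1 : ℝ))) p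
        ∈ ({0, 1} : Set ℝ)) := by
  have hm := sigmaLambda_le Ω
  have hA : Measurable (fun p : Bool × Bool × Ω => p.1) := measurable_fst
  have hB : Measurable (fun p : Bool × Bool × Ω => p.2.1) := measurable_snd.fst
  have hf_le_one (k ω) : f k ω ≤ 1 :=
    hf_sum ω ▸ Finset.single_le_sum (fun j _ => hf_nonneg j ω) (Finset.mem_univ k)
  have hfΛ (k) : Measurable[sigmaLambda Ω] fun p : Bool × Bool × Ω => f k p.2.2 :=
    (hf_meas k).comp (comap_measurable _)
  have hfΛ_int (k) : Integrable (fun p : Bool × Bool × Ω => f k p.2.2) P :=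
    .of_bound ((hfΛ k).mono hm le_rfl).aestronglyMeasurable 1 (.of_forall fun p => by
      simpa [abs_of_nonneg (hf_nonneg k _)] using hf_le_one k p.2.2)
  have hkey (k : Fin 4) :=
    hPUC.mul_condExp_mul_ae_eq_zero_of_setIntegral_eq_zero hA hB (measurableSet_singleton _)
      (measurableSet_singleton _) (hfΛ k).stronglyMeasurable (hfΛ_int k)
      (.of_forall fun p => hf_nonneg k p.2.2) (hanti k)
  filter_upwards [ae_all_iff.2 hkey, ae_condExp_preimage_true_mem_zero_one_of_eq_zero hm hA,
    ae_condExp_preimage_true_mem_zero_one_of_eq_zero hm hB] with p hp hAp hBp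
  obtain ⟨k, hk⟩ : ∃ k, f k p.2.2 ≠ 0 := by
    by_contra! h
    simpa [h] using hf_sum p.2.2
  rcases mul_eq_zero.1 ((mul_eq_zero.1 (hp k)).resolve_left hk) with h | h
  · exact .inl (hAp _ h)
  · exact .inr (hBp _ h)

/-- PBR-without-CPA core step: preparations `A`, `B` chosen by independent fair coins
(hypothesis `hAB`), a four-outcome readout with response functions `f k` of the ontic
state only, antidistinguishability (`hanti`), and the Preparation Uninformativeness
Condition (`hPUC`: `A` and `B` conditionally independent given `σ(Λ)`) together imply
that almost every ontic state determines with certainty at least one of the two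
preparation choices: a.s. the conditional probability of `{A = tt}` given `σ(Λ)` is
0 or 1, or that of `{B = tt}` given `σ(Λ)` is 0 or 1. -/
theorem stmt6 {Ω : Type*} [MeasurableSpace Ω] [StandardBorelSpace Ω] [Nonempty Ω]
    (P : Measure (Bool × Bool × Ω)) [IsProbabilityMeasure P]
    (hAB : ∀ a b : Bool,
      Measure.map (fun p : Bool × Bool × Ω => (p.1, p.2.1)) P {(a, b)} = 1 / 4)
    (f : Fin 4 → Ω → ℝ)
    (hf_meas : ∀ k, Measurable (f k))
    (hf_nonneg : ∀ k ω, 0 ≤ f k ω)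
    (hf_sum : ∀ ω, ∑ k, f k ω = 1)
    (hanti : ∀ k, (∫ p in {p : Bool × Bool × Ω |
        p.1 = (prepPair k).1 ∧ p.2.1 = (prepPair k).2}, f k p.2.2 ∂P) = 0)
    (hPUC : CondIndepFun (sigmaLambda Ω) (sigmaLambda_le Ω)
      (fun p : Bool × Bool × Ω => p.1) (fun p : Bool × Bool × Ω => p.2.1) P) :
    ∀ᵐ p ∂P,
      (MeasureTheory.condExp (sigmaLambda Ω) P
          (Set.indicator {q : Bool × Bool × Ω | q.1 = true} (fun _ => (1 : ℝ))) p
        ∈ ({0, 1} : Set ℝ)) ∨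
      (MeasureTheory.condExp (sigmaLambda Ω) P
          (Set.indicator {q : Bool × Bool × Ω | q.2.1 = true} (fun _ => (1 : ℝ))) p
        ∈ ({0, 1} : Set ℝ)) :=
  stmt6_general P f hf_meas hf_nonneg hf_sum hanti hPUC
end

section
/- Let (Ω_1, 𝒜_1) and (Ω_2, 𝒜_2) be measurable spaces, let μ_ff, μ_tt be probability measures on Ω_1 and ν_ff, ν_tt probability measures on Ω_2, and let P be the probability measure on Bool × Bool × (Ω_1 × Ω_2) given by P = (1/4) ∑_{a,b ∈ Bool} δ_a × δ_b × (μ_a × ν_b), i.e., the preparation pair (a, b) is uniform on Bool × Bool and, conditional on (a, b), the ontic state is distributed as the product measure μ_a × ν_b. Then the first coordinate A and the second coordinate B are conditionally independent given the σ-algebra generated by the third coordinate Λ = (ω_1, ω_2). -/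
/-!
Given the ontic state `(ω₁, ω₂)`, the preparation pair `(a, b)` has posterior weights given by the
densities of `μ a × ν b` against `(∑ μ) × (∑ ν)`, and these densities factor as
`dμ_a/d(∑ μ) (ω₁) · dν_b/d(∑ ν) (ω₂)`. Hence `P(a ∈ s, b ∈ t | ω) = F_s(ω₁) G_t(ω₂)`, where `F_s`
is the density of `∑_{a ∈ s} μ a`; since `F_univ G_univ = 1`, this is the product of
`P(a ∈ s | ω) = F_s G_univ` and `P(b ∈ t | ω) = F_univ G_t`.
-/

open MeasureTheory ProbabilityTheory
open scoped ENNReal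

section CondExpComap

variable {α β : Type*} [MeasurableSpace α] [mβ : MeasurableSpace β]

theorem condExp_indicator_comap_ae_eq {P : Measure α} [IsFiniteMeasure P] {Λ : α → β}
    (hΛ : Measurable Λ) {S : Set α} (hS : MeasurableSet S) {h : β → ℝ≥0∞} (hh : Measurable h)
    (hd : (P.restrict S).map Λ = (P.map Λ).withDensity h) :
    P⟦S | mβ.comap Λ⟧ =ᵐ[P] fun x ↦ (h (Λ x)).toReal := by
  have hhΛ : Measurable fun x ↦ h (Λ x) := hh.comp hΛ
  have h_setLIntegral (E : Set β) (hE : MeasurableSet E) :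
      ∫⁻ x in Λ ⁻¹' E, h (Λ x) ∂P = P (Λ ⁻¹' E ∩ S) := by
    rw [← setLIntegral_map hE hh hΛ, ← withDensity_apply _ hE, ← hd,
      Measure.map_apply hΛ hE, Measure.restrict_apply (hΛ hE)]
  have h_lintegral : ∫⁻ x, h (Λ x) ∂P ≠ ∞ := by
    simpa using (h_setLIntegral Set.univ .univ).trans_lt (measure_lt_top _ _) |>.ne
  refine (ae_eq_condExp_of_forall_setIntegral_eq hΛ.comap_le ((integrable_const 1).indicator hS)
    (fun _ _ _ ↦ (integrable_toReal_of_lintegral_ne_top hhΛ.aemeasurable h_lintegral).integrableOn)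
    ?_ ?_).symm
  · rintro - ⟨E, hE, rfl⟩ -
    rw [integral_toReal hhΛ.aemeasurable.restrict (ae_restrict_of_ae (ae_lt_top hhΛ h_lintegral)),
      h_setLIntegral E hE, setIntegral_indicator hS, setIntegral_const, smul_eq_mul, mul_one,
      measureReal_def]
  · exact ((hh.comp (comap_measurable Λ)).ennreal_toReal).aestronglyMeasurable

end CondExpComap

namespace MeasureTheory.Measure

variable {ι ι' Ω Ω₁ Ω₂ : Type*} [MeasurableSpace Ω] [MeasurableSpace Ω₁] [MeasurableSpace Ω₂]

theorem finsetSum_prod_finsetSum (μ : ι → Measure Ω₁) (ν : ι' → Measure Ω₂)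
    [∀ j, SFinite (ν j)] (s : Finset ι) (t : Finset ι') :
    (∑ i ∈ s, μ i).prod (∑ j ∈ t, ν j) = ∑ i ∈ s, ∑ j ∈ t, (μ i).prod (ν j) := by
  rw [← sum_coe_finset, ← sum_coe_finset, prod_sum, sum_fintype, Fintype.sum_prod_type,
    ← Finset.sum_coe_sort s]
  simp_rw [← Finset.sum_coe_sort t]

theorem prod_withDensity_rnDeriv {μ M : Measure Ω₁} {ν N : Measure Ω₂} [SigmaFinite μ]
    [SigmaFinite M] [SigmaFinite ν] [SigmaFinite N] (hμ : μ ≪ M) (hν : ν ≪ N) :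
    (M.prod N).withDensity (fun z ↦ μ.rnDeriv M z.1 * ν.rnDeriv N z.2) = μ.prod ν := by
  rw [← prod_withDensity (measurable_rnDeriv _ _) (measurable_rnDeriv _ _),
    withDensity_rnDeriv_eq _ _ hμ, withDensity_rnDeriv_eq _ _ hν]

variable [MeasurableSpace ι] [MeasurableSpace ι']

theorem map_restrict_dirac_prod_dirac_prod (a : ι) (b : ι') (m : Measure Ω) [SFinite m]
    {s : Set ι} {t : Set ι'} (hs : MeasurableSet s) (ht : MeasurableSet t) :
    (((dirac a).prod ((dirac b).prod m)).restrict
      (Prod.fst ⁻¹' s ∩ (fun p : ι × ι' × Ω ↦ p.2.1) ⁻¹' t)).map (fun p ↦ p.2.2)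
      = (dirac a s * dirac b t) • m := by
  rw [dirac_prod, dirac_prod, map_map measurable_prodMk_left measurable_prodMk_left]
  ext E hE
  rw [map_apply (by fun_prop) hE, restrict_apply (by measurability),
    map_apply (by fun_prop) (by measurability)]
  by_cases ha : a ∈ s <;> by_cases hb : b ∈ t <;>
    simp [ha, hb, dirac_apply' _ hs, dirac_apply' _ ht, Set.preimage_preimage,
      Set.preimage_const_of_mem, Set.preimage_const_of_notMem]

variable [Fintype ι] [Fintype ι']

/-- `∑_{a ∈ s} μ a`, with `dirac a s` serving as the indicator of `a ∈ s`. -/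
noncomputable def mixtureOn (μ : ι → Measure Ω) (s : Set ι) : Measure Ω :=
  ∑ a, dirac a s • μ a

theorem mixtureOn_univ (μ : ι → Measure Ω) : mixtureOn μ Set.univ = ∑ a, μ a := by
  simp [mixtureOn]

theorem mixtureOn_le_univ (μ : ι → Measure Ω) (s : Set ι) :
    mixtureOn μ s ≤ mixtureOn μ Set.univ := by
  refine le_iff'.2 fun E ↦ ?_
  simp only [mixtureOn, finsetSum_apply, smul_apply, smul_eq_mul]
  gcongr
  exact Set.subset_univ s

instance (μ : ι → Measure Ω) [∀ a, IsFiniteMeasure (μ a)] (s : Set ι) :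
    IsFiniteMeasure (mixtureOn μ s) :=
  isFiniteMeasure_of_le _ ((mixtureOn_le_univ μ s).trans (mixtureOn_univ μ).le)

/-- The joint law of the preparations `(a, b)`, drawn with weight `c`, and of the ontic state,
distributed as `μ a × ν b` given `(a, b)`. -/
noncomputable def prodMixture (c : ℝ≥0∞) (μ : ι → Measure Ω₁) (ν : ι' → Measure Ω₂) :
    Measure (ι × ι' × (Ω₁ × Ω₂)) :=
  c • ∑ a, ∑ b, (dirac a).prod ((dirac b).prod ((μ a).prod (ν b)))

theorem map_restrict_prodMixture (c : ℝ≥0∞) (μ : ι → Measure Ω₁) (ν : ι' → Measure Ω₂)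
    [∀ a, SFinite (μ a)] [∀ b, SFinite (ν b)] {s : Set ι} {t : Set ι'} (hs : MeasurableSet s)
    (ht : MeasurableSet t) :
    ((prodMixture c μ ν).restrict (Prod.fst ⁻¹' s ∩ (fun p ↦ p.2.1) ⁻¹' t)).map (fun p ↦ p.2.2)
      = c • (mixtureOn μ s).prod (mixtureOn ν t) := by
  rw [prodMixture, ← restrictₗ_apply, ← mapₗ_apply_of_measurable measurable_snd.snd,
    LinearMap.map_smul, LinearMap.map_smul, _root_.map_sum, _root_.map_sum]
  simp_rw [_root_.map_sum, restrictₗ_apply, mapₗ_apply_of_measurable measurable_snd.snd,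
    map_restrict_dirac_prod_dirac_prod _ _ _ hs ht, mixtureOn, finsetSum_prod_finsetSum,
    prod_smul_left, prod_smul_right, smul_smul]

end MeasureTheory.Measure

section PrepMixture

open Measure

variable {ι ι' Ω₁ Ω₂ : Type*} [MeasurableSpace ι] [MeasurableSpace ι'] [Fintype ι] [Fintype ι']
  [MeasurableSpace Ω₁] [MeasurableSpace Ω₂]

theorem condExp_prodMixture_ae_eq {c : ℝ≥0∞} {μ : ι → Measure Ω₁} {ν : ι' → Measure Ω₂}
    [∀ a, IsFiniteMeasure (μ a)] [∀ b, IsFiniteMeasure (ν b)] {P : Measure (ι × ι' × (Ω₁ × Ω₂))}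
    [IsFiniteMeasure P] (hP : P = prodMixture c μ ν) {s : Set ι} {t : Set ι'}
    (hs : MeasurableSet s) (ht : MeasurableSet t) :
    P⟦Prod.fst ⁻¹' s ∩ (fun p ↦ p.2.1) ⁻¹' t | MeasurableSpace.comap (fun p ↦ p.2.2) inferInstance⟧
      =ᵐ[P] fun p ↦ ((mixtureOn μ s).rnDeriv (mixtureOn μ .univ) p.2.2.1 *
        (mixtureOn ν t).rnDeriv (mixtureOn ν .univ) p.2.2.2).toReal := by
  subst hP
  refine condExp_indicator_comap_ae_eq measurable_snd.snd
    ((measurable_fst hs).inter (measurable_snd.fst ht))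
    (((measurable_rnDeriv _ _).comp measurable_fst).mul
      ((measurable_rnDeriv _ _).comp measurable_snd)) ?_
  have h_law := map_restrict_prodMixture c μ ν (s := .univ) (t := .univ) .univ .univ
  simp only [Set.preimage_univ, Set.inter_univ, restrict_univ] at h_law
  rw [map_restrict_prodMixture c μ ν hs ht, h_law, withDensity_smul_measure]
  exact congrArg _ (prod_withDensity_rnDeriv
    (absolutelyContinuous_of_le (mixtureOn_le_univ μ s))
    (absolutelyContinuous_of_le (mixtureOn_le_univ ν t))).symm

theorem condIndepFun_of_eq_prodMixture [StandardBorelSpace ι] [StandardBorelSpace ι']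
    [StandardBorelSpace Ω₁] [StandardBorelSpace Ω₂] {c : ℝ≥0∞} {μ : ι → Measure Ω₁}
    {ν : ι' → Measure Ω₂} [∀ a, IsFiniteMeasure (μ a)] [∀ b, IsFiniteMeasure (ν b)]
    {P : Measure (ι × ι' × (Ω₁ × Ω₂))} [IsFiniteMeasure P] (hP : P = prodMixture c μ ν) :
    CondIndepFun (MeasurableSpace.comap (fun p ↦ p.2.2) inferInstance) measurable_snd.snd.comap_le
      Prod.fst (fun p ↦ p.2.1) P := by
  rw [condIndepFun_iff_condExp_inter_preimage_eq_mul measurable_fst measurable_snd.fst]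
  intro s t hs ht
  filter_upwards [condExp_prodMixture_ae_eq hP hs ht, condExp_prodMixture_ae_eq hP hs .univ,
    condExp_prodMixture_ae_eq hP .univ ht, condExp_prodMixture_ae_eq hP .univ .univ]
    with p h_inter h_left h_right h_univ
  simp only [Set.preimage_univ, Set.inter_univ, Set.univ_inter, Set.indicator_univ,
    condExp_const measurable_snd.snd.comap_le, ENNReal.toReal_mul] at h_left h_right h_univ
  rw [h_inter, h_left, h_right, ENNReal.toReal_mul, ← mul_one (_ * _), h_univ]
  ring

end PrepMixture

theorem stmt7_general {Ω₁ Ω₂ : Type*} [MeasurableSpace Ω₁] [MeasurableSpace Ω₂]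
    [StandardBorelSpace Ω₁] [StandardBorelSpace Ω₂]
    (μ : Bool → Measure Ω₁) (ν : Bool → Measure Ω₂)
    [∀ a, IsProbabilityMeasure (μ a)] [∀ b, IsProbabilityMeasure (ν b)]
    (P : Measure (Bool × Bool × (Ω₁ × Ω₂))) [IsProbabilityMeasure P]
    (hP : P = (1 / 4 : ℝ≥0∞) • ∑ a : Bool, ∑ b : Bool,
      (Measure.dirac a).prod ((Measure.dirac b).prod ((μ a).prod (ν b)))) :
    CondIndepFun (sigmaLambda (Ω₁ × Ω₂)) (sigmaLambda_le (Ω₁ × Ω₂))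
      (fun p : Bool × Bool × (Ω₁ × Ω₂) => p.1)
      (fun p : Bool × Bool × (Ω₁ × Ω₂) => p.2.1) P :=
  condIndepFun_of_eq_prodMixture hP

/-- PIP implies PUC: if the preparation pair `(a, b)` is uniform on `Bool × Bool` and,
conditional on `(a, b)`, the ontic state of the joint system is distributed as the
product measure `μ_a × ν_b`, then the two preparation variables are conditionally
independent given the σ-algebra generated by the ontic state. -/
theorem stmt7 {Ω₁ Ω₂ : Type*} [MeasurableSpace Ω₁] [MeasurableSpace Ω₂]
    [StandardBorelSpace Ω₁] [StandardBorelSpace Ω₂] [Nonempty Ω₁] [Nonempty Ω₂]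
    (μ : Bool → Measure Ω₁) (ν : Bool → Measure Ω₂)
    [∀ a, IsProbabilityMeasure (μ a)] [∀ b, IsProbabilityMeasure (ν b)]
    (P : Measure (Bool × Bool × (Ω₁ × Ω₂))) [IsProbabilityMeasure P]
    (hP : P = (1 / 4 : ℝ≥0∞) • ∑ a : Bool, ∑ b : Bool,
      (Measure.dirac a).prod ((Measure.dirac b).prod ((μ a).prod (ν b)))) :
    CondIndepFun (sigmaLambda (Ω₁ × Ω₂)) (sigmaLambda_le (Ω₁ × Ω₂))
      (fun p : Bool × Bool × (Ω₁ × Ω₂) => p.1)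
      (fun p : Bool × Bool × (Ω₁ × Ω₂) => p.2.1) P :=
  stmt7_general μ ν P hP
end

section
/- Let (Ω, 𝒜) be a measurable space and let P be a probability measure on Bool × Bool × Ω with coordinate maps A, B, Λ, such that the pushforward of P under (A, B) assigns probability 1/4 to each pair in Bool × Bool. Suppose the conditional distributions of Λ given A = ff and given A = tt (i.e., the pushforwards under Λ of P conditioned on {A = ff} and on {A = tt}) are mutually singular, and likewise the conditional distributions of Λ given B = ff and given B = tt are mutually singular. Then A and B are conditionally independent given the σ-algebra generated by Λ. -/
/-!
Mutual singularity of the laws of `Λ` given `A = false` and given `A = true` yields a measurable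
set `S` of ontic states with `A = true ↔ Λ ∈ S` almost surely. So `A` agrees almost surely with
a `σ(Λ)`-measurable function, and a variable measurable with respect to the conditioning
σ-algebra is conditionally independent of every other variable.
-/

open MeasureTheory ProbabilityTheory

section MutuallySingular

variable {α β : Type*} {mα : MeasurableSpace α} {mβ : MeasurableSpace β}
  {μ : Measure α} [IsFiniteMeasure μ] {X : α → β}

lemma map_cond_apply_eq_zero_iff (hX : Measurable X) {s : Set α} {S : Set β}
    (hS : MeasurableSet S) : (μ[|s]).map X S = 0 ↔ μ (s ∩ X ⁻¹' S) = 0 := by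
  rw [Measure.map_apply hX hS, cond_apply' (hX hS), mul_eq_zero,
    or_iff_right (ENNReal.inv_ne_zero.mpr (measure_ne_top μ s))]

lemma exists_null_of_mutuallySingular_map_cond (hX : Measurable X) {s t : Set α}
    (h : (μ[|s]).map X ⟂ₘ (μ[|t]).map X) :
    ∃ S, MeasurableSet S ∧ μ (s ∩ X ⁻¹' S) = 0 ∧ μ (t ∩ X ⁻¹' Sᶜ) = 0 := by
  obtain ⟨S, hS, hs, ht⟩ := h
  exact ⟨S, hS, (map_cond_apply_eq_zero_iff hX hS).mp hs,
    (map_cond_apply_eq_zero_iff hX hS.compl).mp ht⟩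

lemma exists_measurable_ae_eq_comp_of_mutuallySingular (hX : Measurable X) {f : α → Bool}
    (h : (μ[|{a | f a = false}]).map X ⟂ₘ (μ[|{a | f a = true}]).map X) :
    ∃ g : β → Bool, Measurable g ∧ f =ᵐ[μ] g ∘ X := by
  classical
  obtain ⟨S, hS, h_false, h_true⟩ := exists_null_of_mutuallySingular_map_cond hX h
  refine ⟨fun b => decide (b ∈ S), measurable_to_bool (by simpa [Set.preimage] using hS), ?_⟩
  filter_upwards [measure_eq_zero_iff_ae_notMem.mp h_false,
    measure_eq_zero_iff_ae_notMem.mp h_true] with a ha_false ha_true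
  cases hfa : f a <;> simp_all

end MutuallySingular

section CondIndepFun

variable {Ω β γ : Type*} {m' mΩ : MeasurableSpace Ω} [StandardBorelSpace Ω] {hm' : m' ≤ mΩ}
  {mβ : MeasurableSpace β} {mγ : MeasurableSpace γ} {μ : Measure Ω} [IsFiniteMeasure μ]
  {f f' : Ω → β} {g : Ω → γ}

lemma CondIndepFun.congr_left (hfg : CondIndepFun m' hm' f g μ) (hff' : f =ᵐ[μ] f') :
    CondIndepFun m' hm' f' g μ := by
  rw [← condExpKernel_comp_trim (μ := μ) hm'] at hff'
  exact Kernel.IndepFun.congr' hfg (Measure.ae_ae_of_ae_comp hff') (ae_of_all _ fun _ => .rfl)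

lemma condIndepFun_of_ae_eq_measurable_left (hf' : Measurable[m'] f') (hff' : f =ᵐ[μ] f')
    (hg : Measurable g) : CondIndepFun m' hm' f g μ :=
  CondIndepFun.congr_left (condIndepFun_of_measurable_left hf' hg) hff'.symm

end CondIndepFun

theorem stmt8_general {Ω : Type*} [MeasurableSpace Ω] [StandardBorelSpace Ω]
    (P : Measure (Bool × Bool × Ω)) [IsProbabilityMeasure P]
    (hA : (Measure.map (fun p : Bool × Bool × Ω => p.2.2)
            (ProbabilityTheory.cond P {p : Bool × Bool × Ω | p.1 = false})).MutuallySingular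
          (Measure.map (fun p : Bool × Bool × Ω => p.2.2)
            (ProbabilityTheory.cond P {p : Bool × Bool × Ω | p.1 = true}))) :
    CondIndepFun (sigmaLambda Ω) (sigmaLambda_le Ω)
      (fun p : Bool × Bool × Ω => p.1) (fun p : Bool × Bool × Ω => p.2.1) P := by
  obtain ⟨g, hg, hA_eq⟩ := exists_measurable_ae_eq_comp_of_mutuallySingular measurable_snd.snd hA
  exact condIndepFun_of_ae_eq_measurable_left (hg.comp (comap_measurable _)) hA_eq
    measurable_snd.fst

/-- Ontic distinctness implies PUC: preparations `A`, `B` chosen by independent fair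
coins; if the conditional distributions of the ontic state `Λ` given `A = ff` and
`A = tt` are mutually singular, and likewise for `B`, then `A` and `B` are
conditionally independent given the σ-algebra generated by `Λ`. -/
theorem stmt8 {Ω : Type*} [MeasurableSpace Ω] [StandardBorelSpace Ω] [Nonempty Ω]
    (P : Measure (Bool × Bool × Ω)) [IsProbabilityMeasure P]
    (hAB : ∀ a b : Bool,
      Measure.map (fun p : Bool × Bool × Ω => (p.1, p.2.1)) P {(a, b)} = 1 / 4)
    (hA : (Measure.map (fun p : Bool × Bool × Ω => p.2.2)
            (ProbabilityTheory.cond P {p : Bool × Bool × Ω | p.1 = false})).MutuallySingular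
          (Measure.map (fun p : Bool × Bool × Ω => p.2.2)
            (ProbabilityTheory.cond P {p : Bool × Bool × Ω | p.1 = true})))
    (hB : (Measure.map (fun p : Bool × Bool × Ω => p.2.2)
            (ProbabilityTheory.cond P {p : Bool × Bool × Ω | p.2.1 = false})).MutuallySingular
          (Measure.map (fun p : Bool × Bool × Ω => p.2.2)
            (ProbabilityTheory.cond P {p : Bool × Bool × Ω | p.2.1 = true}))) :
    CondIndepFun (sigmaLambda Ω) (sigmaLambda_le Ω)
      (fun p : Bool × Bool × Ω => p.1) (fun p : Bool × Bool × Ω => p.2.1) P :=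
  stmt8_general P hA
end
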